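/- arXiv:2210.13922 — 2 statements merged into one kernel-verified Lean document; each statement's English description precedes it below -/
import Mathlib

section
/- Fix 0 < p < ∞. Every extremal function φ for exponent p is real-valued on ℝ, i.e. φ(x) ∈ ℝ for every real x. -/
open MeasureTheory Real

noncomputable section

/-- `f` is an entire function of exponential type at most `π`. -/
def ExpTypePi (f : ℂ → ℂ) : Prop :=
  ∀ ε : ℝ, 0 < ε → ∃ C : ℝ, 0 < C ∧
    ∀ z : ℂ, ‖f z‖ ≤ C * Real.exp ((Real.pi + ε) * ‖z‖)

/-- Membership in the Paley–Wiener space `PW^p`. -/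
def MemPW (p : ℝ) (f : ℂ → ℂ) : Prop :=
  Differentiable ℂ f ∧ ExpTypePi f ∧
    Integrable (fun x : ℝ => ‖f x‖ ^ p)

/-- `‖f‖_p^p`, the `p`-th power of the `L^p(ℝ)` norm of `f` restricted to `ℝ`. -/
def PWnorm (p : ℝ) (f : ℂ → ℂ) : ℝ := ∫ x : ℝ, ‖f x‖ ^ p

/-- `𝒞_p`: the norm of point evaluation at the origin in `PW^p`. -/
def Cconst (p : ℝ) : ℝ :=
  sSup { r : ℝ | ∃ f : ℂ → ℂ, MemPW p f ∧ (∃ z : ℂ, f z ≠ 0) ∧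
    r = ‖f 0‖ ^ p / PWnorm p f }

/-- `φ` is an extremal function for exponent `p`. -/
def IsExtremal (p : ℝ) (φ : ℂ → ℂ) : Prop :=
  MemPW p φ ∧ φ 0 = 1 ∧
    ∀ f : ℂ → ℂ, MemPW p f → f 0 = 1 → PWnorm p φ ≤ PWnorm p f

/-!
Averaging `φ` with its Schwarz reflection `z ↦ conj (φ (conj z))` gives `ψ ∈ PW^p` with
`ψ 0 = 1` and `ψ = Re φ` on `ℝ`, so `|ψ| ≤ |φ|` there. Extremality of `φ` forces
`∫ |ψ|^p = ∫ |φ|^p`, and since both integrands are continuous, `|Re φ| = |φ|` everywhere on `ℝ`.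
-/

open ComplexConjugate

theorem Continuous.eq_of_le_of_integral_le {X : Type*} [TopologicalSpace X] [MeasurableSpace X]
    [OpensMeasurableSpace X] {μ : Measure X} [μ.IsOpenPosMeasure] {u v : X → ℝ}
    (hu : Continuous u) (hv : Continuous v) (huv : u ≤ v) (hu_int : Integrable u μ)
    (hv_int : Integrable v μ) (h : ∫ x, v x ∂μ ≤ ∫ x, u x ∂μ) : u = v := by
  have hgap : ∫ x, (v - u) x ∂μ = 0 := by
    rw [Pi.sub_def, integral_sub hv_int hu_int]
    linarith [integral_mono hu_int hv_int huv]
  have hgap_ae : v - u =ᵐ[μ] 0 :=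
    (integral_eq_zero_iff_of_nonneg (sub_nonneg.mpr huv) (hv_int.sub hu_int)).mp hgap
  exact (sub_eq_zero.mp (((hv.sub hu).ae_eq_iff_eq μ continuous_const).mp hgap_ae)).symm

namespace ExpTypePi

theorem conj_conj {f : ℂ → ℂ} (hf : ExpTypePi f) : ExpTypePi (conj ∘ f ∘ conj) := by
  intro ε hε
  obtain ⟨C, hC, hbound⟩ := hf ε hε
  exact ⟨C, hC, fun z => by simpa using hbound (conj z)⟩

theorem add {f g : ℂ → ℂ} (hf : ExpTypePi f) (hg : ExpTypePi g) : ExpTypePi (f + g) := by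
  intro ε hε
  obtain ⟨C, hC, hfC⟩ := hf ε hε
  obtain ⟨D, hD, hgD⟩ := hg ε hε
  refine ⟨C + D, add_pos hC hD, fun z => ?_⟩
  calc ‖f z + g z‖ ≤ ‖f z‖ + ‖g z‖ := norm_add_le _ _
    _ ≤ (C + D) * Real.exp ((Real.pi + ε) * ‖z‖) := by linarith [hfC z, hgD z]

theorem smul {f : ℂ → ℂ} (hf : ExpTypePi f) (c : ℂ) : ExpTypePi (c • f) := by
  intro ε hε
  obtain ⟨C, hC, hfC⟩ := hf ε hε
  refine ⟨(‖c‖ + 1) * C, by positivity, fun z => ?_⟩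
  calc ‖c * f z‖ = ‖c‖ * ‖f z‖ := norm_mul _ _
    _ ≤ (‖c‖ + 1) * (C * Real.exp ((Real.pi + ε) * ‖z‖)) := by
        gcongr
        · linarith
        · exact hfC z
    _ = _ := by ring

end ExpTypePi

def realPartExt (f : ℂ → ℂ) : ℂ → ℂ := (1 / 2 : ℂ) • (f + conj ∘ f ∘ conj)

theorem realPartExt_ofReal (f : ℂ → ℂ) (x : ℝ) : realPartExt f x = (f x).re := by
  simp only [realPartExt, Pi.smul_apply, Pi.add_apply, Function.comp_apply, Complex.conj_ofReal,
    Complex.add_conj, smul_eq_mul]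
  push_cast
  ring

theorem norm_realPartExt_ofReal_le (f : ℂ → ℂ) (x : ℝ) : ‖realPartExt f x‖ ≤ ‖f x‖ := by
  rw [realPartExt_ofReal, Complex.norm_real, Real.norm_eq_abs]
  exact Complex.abs_re_le_norm _

theorem Differentiable.realPartExt {f : ℂ → ℂ} (hf : Differentiable ℂ f) :
    Differentiable ℂ (realPartExt f) :=
  (hf.add fun _ => differentiableAt_conj_conj_iff.mpr (hf _)).const_smul _

theorem Differentiable.continuous_ofReal {f : ℂ → ℂ} (hf : Differentiable ℂ f) :
    Continuous fun x : ℝ => f x :=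
  hf.continuous.comp Complex.continuous_ofReal

section

variable {p : ℝ} {f : ℂ → ℂ}

theorem rpow_norm_realPartExt_ofReal_le (hp : 0 ≤ p) (x : ℝ) :
    ‖realPartExt f x‖ ^ p ≤ ‖f x‖ ^ p :=
  Real.rpow_le_rpow (norm_nonneg _) (norm_realPartExt_ofReal_le f x) hp

theorem Differentiable.continuous_rpow_norm_ofReal (hp : 0 ≤ p) (hf : Differentiable ℂ f) :
    Continuous fun x : ℝ => ‖f x‖ ^ p :=
  (continuous_norm.comp hf.continuous_ofReal).rpow_const fun _ => Or.inr hp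

theorem MemPW.realPartExt (hp : 0 ≤ p) (hf : MemPW p f) : MemPW p (realPartExt f) := by
  obtain ⟨hdiff, htype, hint⟩ := hf
  refine ⟨hdiff.realPartExt, (htype.add htype.conj_conj).smul _, ?_⟩
  refine hint.mono' (hdiff.realPartExt.continuous_rpow_norm_ofReal hp).aestronglyMeasurable
    (.of_forall fun x => ?_)
  rw [Real.norm_of_nonneg (by positivity)]
  exact rpow_norm_realPartExt_ofReal_le hp x

end

/-- Every extremal function for exponent `p` is real-valued on `ℝ`. -/
theorem extremal_real_on_real (p : ℝ) (hp : 0 < p) (φ : ℂ → ℂ)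
    (hφ : IsExtremal p φ) :
    ∀ x : ℝ, (φ x).im = 0 := by
  obtain ⟨hφPW, hφ0, hmin⟩ := hφ
  have hψPW : MemPW p (realPartExt φ) := hφPW.realPartExt hp.le
  have hψ0 : realPartExt φ 0 = 1 := by
    simpa [hφ0] using realPartExt_ofReal φ 0
  have hnorm_eq := Continuous.eq_of_le_of_integral_le (μ := volume)
    (hψPW.1.continuous_rpow_norm_ofReal hp.le) (hφPW.1.continuous_rpow_norm_ofReal hp.le)
    (rpow_norm_realPartExt_ofReal_le hp.le) hψPW.2.2 hφPW.2.2 (hmin _ hψPW hψ0)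
  intro x
  have hx := congrFun hnorm_eq x
  rw [Real.rpow_left_inj (norm_nonneg _) (norm_nonneg _) hp.ne', realPartExt_ofReal,
    Complex.norm_real, Real.norm_eq_abs] at hx
  exact Complex.abs_re_eq_norm.mp hx

end
end

section
/- Fix 0 < p < ∞ and let φ be an extremal function for exponent p. Then: (a) for every real zero t of φ, ∫_ℝ |φ(x)|^p · x/(x−t) dx = 0; (b) for any two distinct real zeros t ≠ s of φ, ∫_ℝ |φ(x)|^p · x²/((x−t)(x−s)) dx = 0. -/
open MeasureTheory Real

noncomputable section

/-!
Perturb the extremal function: if `g ∈ PW^p`, `g 0 = 0` and `g = u φ` on `ℝ`, then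
`c ↦ ‖φ + c g‖_p^p = ∫ |φ|^p |1 + c u|^p` is minimal at `c = 0`. Its derivative there is
`p ∫ |φ|^p u`, by dominated convergence of the difference quotients, which are bounded by
`K (|u| + |u|^p)`; so `∫ |φ|^p u = 0`. For a real zero `t` of `φ`, dividing by `z - t` preserves
`PW^p`, so `g(z) = z φ(z) / (z - t)` and, for a second zero `s`, `g(z) = z² φ(z) / ((z - t)(z - s))`
are admissible, with `u = x / (x - t)` and `u = x² / ((x - t)(x - s))`. Integrability of
`|φ|^p u` comes from partial fractions and `|φ(x)|^p / |x - t| = O(|x - t|^(p - 1))` near `t`.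
-/

open Filter Topology Set Asymptotics

lemma hasDerivAt_abs_one_add_mul_rpow (p v : ℝ) :
    HasDerivAt (fun c : ℝ => |1 + c * v| ^ p) (p * v) 0 := by
  have hlin : HasDerivAt (fun c : ℝ => 1 + c * v) v 0 := by
    simpa using ((hasDerivAt_id (0 : ℝ)).mul_const v).const_add 1
  have hpos : ∀ᶠ c in 𝓝 (0 : ℝ), 0 < 1 + c * v :=
    hlin.continuousAt.eventually (eventually_gt_nhds (by norm_num))
  have h := hlin.rpow_const (p := p) (Or.inl (by norm_num))
  simp only [zero_mul, add_zero, one_rpow, mul_one] at h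
  rw [mul_comm]
  exact h.congr_of_eventuallyEq (hpos.mono fun c hc => by simp only [abs_of_pos hc])

lemma exists_norm_sub_le_mul_norm_sub_of_differentiableAt {𝕜 E : Type*}
    [NontriviallyNormedField 𝕜] [NormedAddCommGroup E] [NormedSpace 𝕜 E] {h : 𝕜 → E} {a : 𝕜}
    (hc : Continuous h) (hd : DifferentiableAt 𝕜 h a) {s : Set 𝕜} (hs : IsCompact s) :
    ∃ B, ∀ x ∈ s, ‖h x - h a‖ ≤ B * ‖x - a‖ := by
  have hslope : Continuous (dslope h a) :=
    continuousOn_univ.mp ((continuousOn_dslope univ_mem).mpr ⟨hc.continuousOn, hd⟩)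
  obtain ⟨B, hB⟩ := hs.exists_bound_of_continuousOn hslope.continuousOn
  refine ⟨B, fun x hx => ?_⟩
  rw [← sub_smul_dslope, norm_smul, mul_comm]
  exact mul_le_mul_of_nonneg_right (hB x hx) (norm_nonneg _)

lemma abs_mul_rpow_le {p c v : ℝ} (hp : 0 < p) (hc : |c| ≤ 1) (hcv : 1 / 2 ≤ |c * v|) :
    |c * v| ^ p ≤ |c| * (2 * |v| + |v| ^ p) := by
  have hv : 0 ≤ |v| ^ p := by positivity
  rcases le_total p 1 with hp1 | hp1
  · have h2 : (2 * |c * v|) ^ p ≤ 2 * |c * v| := rpow_le_self_of_one_le (by linarith) hp1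
    have h1 : |c * v| ^ p ≤ (2 * |c * v|) ^ p :=
      rpow_le_rpow (abs_nonneg _) (by linarith [abs_nonneg (c * v)]) hp.le
    rw [abs_mul] at h1 h2 ⊢
    nlinarith [abs_nonneg c]
  · rw [abs_mul, mul_rpow (abs_nonneg c) (abs_nonneg v)]
    have hc0 : 0 < |c| := by
      rcases (abs_nonneg c).eq_or_lt with h | h
      · rw [abs_mul, ← h] at hcv; norm_num at hcv
      · exact h
    have : |c| ^ p ≤ |c| := rpow_le_self_of_le_one hc0.le hc hp1
    nlinarith [abs_nonneg v]

lemma exists_abs_abs_one_add_mul_rpow_sub_one_le {p : ℝ} (hp : 0 < p) :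
    ∃ K, 0 ≤ K ∧ ∀ c v : ℝ, |c| ≤ 1 → |(|1 + c * v| ^ p - 1)| ≤ K * |c| * (|v| + |v| ^ p) := by
  obtain ⟨B, hB⟩ := exists_norm_sub_le_mul_norm_sub_of_differentiableAt
    (h := fun a : ℝ => |1 + a * 1| ^ p)
    ((continuous_const.add (continuous_id.mul continuous_const)).abs.rpow_const
      fun _ => Or.inr hp.le)
    (hasDerivAt_abs_one_add_mul_rpow p 1).differentiableAt (isCompact_closedBall (0 : ℝ) (1 / 2))
  refine ⟨max B 0 + 4 * 3 ^ p, by positivity, fun c v hc => ?_⟩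
  have hv : 0 ≤ |v| ^ p := by positivity
  have h3 : 0 ≤ (3 : ℝ) ^ p := by positivity
  rcases le_total |c * v| (1 / 2) with hsmall | hlarge
  · have := hB (c * v) (by simpa using hsmall)
    simp only [mul_one, add_zero, abs_one, one_rpow, Real.norm_eq_abs,
      sub_zero, abs_mul] at this
    have hcv : 0 ≤ |c| * |v| := by positivity
    calc |(|1 + c * v| ^ p - 1)| ≤ max B 0 * (|c| * |v|) :=
          this.trans (mul_le_mul_of_nonneg_right (le_max_left B 0) hcv)
      _ ≤ (max B 0 + 4 * 3 ^ p) * |c| * (|v| + |v| ^ p) := by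
          nlinarith [le_max_right B 0, mul_nonneg (abs_nonneg c) hv,
            mul_nonneg (le_max_right B 0) (mul_nonneg (abs_nonneg c) hv),
            mul_nonneg h3 (mul_nonneg (abs_nonneg c) hv), mul_nonneg h3 hcv]
  · have hsum : |1 + c * v| ^ p + 1 ≤ 2 * 3 ^ p * |c * v| ^ p := by
      have h1 : |1 + c * v| ^ p ≤ (3 * |c * v|) ^ p :=
        rpow_le_rpow (abs_nonneg _) (by linarith [abs_add_le (1 : ℝ) (c * v), abs_one (α := ℝ)])
          hp.le
      have h2 : 1 ≤ (3 * |c * v|) ^ p := one_le_rpow (by linarith) hp.le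
      rw [mul_rpow (by norm_num) (abs_nonneg _)] at h1 h2
      linarith
    have hdiff : |(|1 + c * v| ^ p - 1)| ≤ |1 + c * v| ^ p + 1 := by
      have : 0 ≤ |1 + c * v| ^ p := by positivity
      rw [abs_le]; constructor <;> linarith
    have := abs_mul_rpow_le hp hc hlarge
    nlinarith [le_max_right B 0, abs_nonneg c, abs_nonneg v, mul_nonneg (abs_nonneg c) hv,
      mul_nonneg (abs_nonneg c) (abs_nonneg v)]

theorem hasDerivAt_integral_mul_abs_one_add_mul_rpow {α : Type*} [MeasurableSpace α]
    {μ : Measure α} {p : ℝ} (hp : 0 < p) {w u : α → ℝ} (hw : Integrable w μ)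
    (hu : AEMeasurable u μ) (hwu : Integrable (fun x => w x * u x) μ)
    (hwup : Integrable (fun x => w x * |u x| ^ p) μ) :
    HasDerivAt (fun c : ℝ => ∫ x, w x * |1 + c * u x| ^ p ∂μ) (p * ∫ x, w x * u x ∂μ) 0 := by
  obtain ⟨K, hK0, hK⟩ := exists_abs_abs_one_add_mul_rpow_sub_one_le hp
  set Q : ℝ → α → ℝ := fun c x => w x * slope (fun c => |1 + c * u x| ^ p) 0 c
  set D : α → ℝ := fun x => K * (‖w x * u x‖ + ‖w x * |u x| ^ p‖)
  have hQ_meas : ∀ c, AEStronglyMeasurable (Q c) μ := fun c => by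
    simp only [Q, slope_def_field]
    exact (hw.aemeasurable.mul (by fun_prop)).aestronglyMeasurable
  have hQ_le : ∀ c, |c| ≤ 1 → ∀ x, ‖Q c x‖ ≤ D x := fun c hc x => by
    have hslope : |slope (fun c => |1 + c * u x| ^ p) 0 c| ≤ K * (|u x| + |u x| ^ p) := by
      rw [slope_def_field, zero_mul, add_zero, abs_one, one_rpow, sub_zero, abs_div]
      rcases eq_or_ne c 0 with rfl | hc0
      · simp only [abs_zero, div_zero]
        positivity
      · rw [div_le_iff₀ (abs_pos.mpr hc0)]
        linarith [hK c (u x) hc]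
    simp only [Q, D, Real.norm_eq_abs, abs_mul, abs_abs, abs_rpow_of_nonneg (abs_nonneg _)]
    nlinarith [mul_le_mul_of_nonneg_left hslope (abs_nonneg (w x))]
  have hQ_int : ∀ c, |c| ≤ 1 → Integrable (Q c) μ := fun c hc =>
    ((hwu.norm.add hwup.norm).const_mul K).mono' (hQ_meas c) (.of_forall (hQ_le c hc))
  have hF : ∀ c, |c| ≤ 1 →
      ∫ x, w x * |1 + c * u x| ^ p ∂μ = ∫ x, w x ∂μ + c * ∫ x, Q c x ∂μ := by
    intro c hc
    rw [← integral_const_mul, ← integral_add hw ((hQ_int c hc).const_mul c)]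
    congr 1 with x
    rcases eq_or_ne c 0 with rfl | hc0
    · simp
    · simp only [Q, slope_def_field, zero_mul, add_zero, abs_one, one_rpow, sub_zero]
      field_simp
      ring
  have hsmall : ∀ᶠ c in 𝓝[≠] (0 : ℝ), |c| ≤ 1 :=
    nhdsWithin_le_nhds ((continuous_abs.tendsto 0).eventually (eventually_le_nhds (by simp)))
  rw [hasDerivAt_iff_tendsto_slope]
  have hlim : Tendsto (fun c => ∫ x, Q c x ∂μ) (𝓝[≠] 0) (𝓝 (∫ x, w x * (p * u x) ∂μ)) := by
    refine tendsto_integral_filter_of_dominated_convergence D (.of_forall hQ_meas) ?_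
      ((hwu.norm.add hwup.norm).const_mul K) (.of_forall fun x => ?_)
    · exact hsmall.mono fun c hc => .of_forall (hQ_le c hc)
    · exact (hasDerivAt_iff_tendsto_slope.mp
        (hasDerivAt_abs_one_add_mul_rpow p (u x))).const_mul (w x)
  rw [integral_congr_ae (.of_forall fun x => mul_left_comm (w x) p (u x)),
    integral_const_mul] at hlim
  refine hlim.congr' ?_
  filter_upwards [hsmall, self_mem_nhdsWithin] with c hc (hc0 : c ≠ 0)
  rw [slope_def_field, hF c hc, hF 0 (by simp)]
  field_simp
  ring

lemma integrable_norm_rpow_div {E : Type*} [NormedAddCommGroup E] [NormedSpace ℝ E]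
    {f : ℝ → E} {p : ℝ} (hp : 0 < p) (hf : Continuous f) (hd : DifferentiableAt ℝ f 0)
    (h0 : f 0 = 0) (hint : Integrable fun x => ‖f x‖ ^ p) :
    Integrable fun x => ‖f x‖ ^ p / x := by
  obtain ⟨M, hM⟩ := exists_norm_sub_le_mul_norm_sub_of_differentiableAt hf hd
    (isCompact_closedBall (0 : ℝ) 1)
  simp only [h0, sub_zero] at hM
  have hmeas : AEStronglyMeasurable (fun x => ‖f x‖ ^ p / x) :=
    ((hf.norm.rpow_const fun _ => Or.inr hp.le).measurable.div measurable_id).aestronglyMeasurable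
  have hnear : IntegrableOn (fun x => ‖f x‖ ^ p / x) (Metric.ball 0 1) := by
    refine integrableOn_ball_of_norm_le_rpow (C := |M| ^ p) (α := 1 - p) (by simp)
      (by simp only [Module.finrank_self, Nat.cast_one]; linarith) ?_ hmeas
    filter_upwards [ae_restrict_mem measurableSet_ball, (volume.restrict _).ae_ne 0] with x hx hx0
    have hx' : ‖f x‖ ≤ |M| * ‖x‖ :=
      (hM x (Metric.ball_subset_closedBall hx)).trans (by gcongr; exact le_abs_self M)
    rw [norm_div, Real.norm_of_nonneg (by positivity), neg_sub,
      rpow_sub_one (norm_ne_zero_iff.mpr hx0), mul_div_assoc',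
      ← mul_rpow (abs_nonneg M) (norm_nonneg x)]
    gcongr
  have hfar : IntegrableOn (fun x => ‖f x‖ ^ p / x) (Metric.ball 0 1)ᶜ := by
    refine hint.integrableOn.mono' hmeas.restrict ?_
    filter_upwards [ae_restrict_mem measurableSet_ball.compl] with x hx
    have hx1 : 1 ≤ |x| := by simpa using hx
    rw [norm_div, Real.norm_of_nonneg (by positivity), Real.norm_eq_abs]
    exact div_le_self (by positivity) hx1
  simpa using hnear.union hfar

lemma integrable_norm_rpow_div_sub {E : Type*} [NormedAddCommGroup E] [NormedSpace ℝ E]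
    {f : ℝ → E} {p t : ℝ} (hp : 0 < p) (hf : Continuous f) (hd : DifferentiableAt ℝ f t)
    (ht : f t = 0) (hint : Integrable fun x => ‖f x‖ ^ p) :
    Integrable fun x => ‖f x‖ ^ p / (x - t) := by
  have hd' : DifferentiableAt ℝ (fun y => f (y + t)) 0 := by
    rw [← zero_add t] at hd
    exact hd.comp 0 (differentiableAt_id.add_const t)
  have := integrable_norm_rpow_div hp (hf.comp (continuous_add_const t)) hd' (by simpa using ht)
    (hint.comp_add_right t)
  simpa using this.comp_sub_right t

lemma ExpTypePi.add_const_mul {f g : ℂ → ℂ} (hf : ExpTypePi f) (hg : ExpTypePi g) (c : ℂ) :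
    ExpTypePi fun z => f z + c * g z := by
  intro ε hε
  obtain ⟨C₁, hC₁, hf⟩ := hf ε hε
  obtain ⟨C₂, hC₂, hg⟩ := hg ε hε
  refine ⟨C₁ + ‖c‖ * C₂, by positivity, fun z => ?_⟩
  calc ‖f z + c * g z‖ ≤ ‖f z‖ + ‖c‖ * ‖g z‖ := (norm_add_le _ _).trans_eq (by rw [norm_mul])
    _ ≤ C₁ * exp ((π + ε) * ‖z‖) + ‖c‖ * (C₂ * exp ((π + ε) * ‖z‖)) := by
        gcongr
        exacts [hf z, hg z]
    _ = (C₁ + ‖c‖ * C₂) * exp ((π + ε) * ‖z‖) := by ring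

lemma ExpTypePi.of_isBigO {f g : ℂ → ℂ} (hf : ExpTypePi f) (hg : Continuous g)
    (h : g =O[cocompact ℂ] f) : ExpTypePi g := by
  obtain ⟨c, hc, hcg⟩ := h.exists_pos
  obtain ⟨K, hK, hKg⟩ := mem_cocompact.mp hcg.bound
  obtain ⟨M, hM⟩ := hK.exists_bound_of_continuousOn hg.continuousOn
  intro ε hε
  obtain ⟨C, hC, hfC⟩ := hf ε hε
  refine ⟨|M| + c * C, by positivity, fun z => ?_⟩
  have hexp : 1 ≤ exp ((π + ε) * ‖z‖) :=
    one_le_exp (mul_nonneg (by linarith [pi_pos]) (norm_nonneg z))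
  by_cases hz : z ∈ K
  · calc ‖g z‖ ≤ |M| := (hM z hz).trans (le_abs_self M)
      _ ≤ (|M| + c * C) * exp ((π + ε) * ‖z‖) := by
          nlinarith [abs_nonneg M, mul_pos hc hC]
  · calc ‖g z‖ ≤ c * ‖f z‖ := hKg hz
      _ ≤ c * (C * exp ((π + ε) * ‖z‖)) := by gcongr; exact hfC z
      _ ≤ (|M| + c * C) * exp ((π + ε) * ‖z‖) := by nlinarith [abs_nonneg M]

lemma integrable_norm_rpow_iff_memLp {α E : Type*} [MeasurableSpace α] {μ : Measure α}
    [NormedAddCommGroup E] {f : α → E} {p : ℝ} (hp : 0 < p) (hf : AEStronglyMeasurable f μ) :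
    Integrable (fun x => ‖f x‖ ^ p) μ ↔ MemLp f (ENNReal.ofReal p) μ := by
  have h := integrable_norm_rpow_iff hf (by simpa using hp) ENNReal.ofReal_ne_top
  rwa [ENNReal.toReal_ofReal hp.le] at h

lemma MemPW.add_const_mul {p : ℝ} (hp : 0 < p) {f g : ℂ → ℂ} (hf : MemPW p f)
    (hg : MemPW p g) (c : ℂ) : MemPW p fun z => f z + c * g z := by
  obtain ⟨hfd, hft, hfi⟩ := hf
  obtain ⟨hgd, hgt, hgi⟩ := hg
  have hmeas : ∀ {h : ℂ → ℂ}, Differentiable ℂ h → AEStronglyMeasurable (fun x : ℝ => h x) :=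
    fun hd => (hd.continuous.comp Complex.continuous_ofReal).aestronglyMeasurable
  refine ⟨hfd.add (hgd.const_mul c), hft.add_const_mul hgt c, ?_⟩
  rw [integrable_norm_rpow_iff_memLp hp (hmeas hfd)] at hfi
  rw [integrable_norm_rpow_iff_memLp hp (hmeas hgd)] at hgi
  refine (integrable_norm_rpow_iff_memLp hp (hmeas (hfd.add (hgd.const_mul c)))).mpr ?_
  exact hfi.add (hgi.const_mul c)

lemma isBigO_dslope_cocompact {𝕜 E : Type*} [NontriviallyNormedField 𝕜] [ProperSpace 𝕜]
    [NormedAddCommGroup E] [NormedSpace 𝕜 E] {f : 𝕜 → E} {t : 𝕜} (ht : f t = 0) :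
    dslope f t =O[cocompact 𝕜] f := by
  refine IsBigO.of_bound 1 ?_
  filter_upwards [(isCompact_closedBall t 1).compl_mem_cocompact] with z hz
  have hz1 : 1 < ‖z - t‖ := by simpa [dist_eq_norm] using hz
  have hzt : z ≠ t := by rintro rfl; simp only [sub_self, norm_zero] at hz1; linarith
  rw [dslope_of_ne f hzt, slope_def_module, ht, sub_zero, norm_smul, norm_inv, one_mul]
  exact mul_le_of_le_one_left (norm_nonneg _) (inv_le_one_of_one_le₀ hz1.le)

lemma MemPW.of_isBigO {p : ℝ} (hp : 0 < p) {f g : ℂ → ℂ} (hf : MemPW p f)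
    (hg : Differentiable ℂ g) (h : g =O[cocompact ℂ] f) : MemPW p g := by
  refine ⟨hg, hf.2.1.of_isBigO hg.continuous h, ?_⟩
  have hreal : (fun x : ℝ => g x) =O[cocompact ℝ] fun x : ℝ => f x :=
    h.comp_tendsto Complex.isometry_ofReal.isClosedEmbedding.tendsto_cocompact
  exact ((hg.continuous.comp Complex.continuous_ofReal).norm.rpow_const
    fun _ => Or.inr hp.le).locallyIntegrable.integrable_of_isBigO_cocompact
    (hreal.norm_norm.rpow hp.le (.of_forall fun _ => norm_nonneg _)) (hf.2.2.integrableAtFilter _)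

lemma MemPW.dslope {p : ℝ} (hp : 0 < p) {f : ℂ → ℂ} (hf : MemPW p f) {t : ℂ} (ht : f t = 0) :
    MemPW p (dslope f t) :=
  hf.of_isBigO hp (differentiableOn_univ.mp ((Complex.differentiableOn_dslope univ_mem).mpr
    hf.1.differentiableOn)) (isBigO_dslope_cocompact ht)

def mulDslope (f : ℂ → ℂ) (t z : ℂ) : ℂ := z * dslope f t z

lemma mulDslope_eq_add {f : ℂ → ℂ} {t : ℂ} (ht : f t = 0) :
    mulDslope f t = fun z => f z + t * dslope f t z := by
  funext z
  have h := sub_smul_dslope f t z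
  rw [smul_eq_mul, ht, sub_zero] at h
  rw [mulDslope, ← h]
  ring

lemma mulDslope_of_ne {f : ℂ → ℂ} {t z : ℂ} (ht : f t = 0) (hz : z ≠ t) :
    mulDslope f t z = z / (z - t) * f z := by
  rw [mulDslope, dslope_of_ne f hz, slope_def_field, ht, sub_zero]
  ring

lemma MemPW.mulDslope {p : ℝ} (hp : 0 < p) {f : ℂ → ℂ} (hf : MemPW p f) {t : ℂ} (ht : f t = 0) :
    MemPW p (mulDslope f t) :=
  mulDslope_eq_add ht ▸ hf.add_const_mul hp (hf.dslope hp ht) t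

theorem IsExtremal.integral_mul_eq_zero {p : ℝ} (hp : 0 < p) {φ g : ℂ → ℂ} {u : ℝ → ℝ}
    (hφ : IsExtremal p φ) (hg : MemPW p g) (hg0 : g 0 = 0) (hu : AEMeasurable u)
    (hgu : ∀ᵐ x : ℝ, g x = u x * φ x) (hφu : Integrable fun x : ℝ => ‖φ x‖ ^ p * u x) :
    ∫ x : ℝ, ‖φ x‖ ^ p * u x = 0 := by
  obtain ⟨hφPW, hφ0, hmin⟩ := hφ
  have hnorm : ∀ c : ℝ, ∀ᵐ x : ℝ, ‖φ x + c * g x‖ ^ p = ‖φ x‖ ^ p * |1 + c * u x| ^ p := by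
    intro c
    filter_upwards [hgu] with x hx
    have : φ x + c * g x = ((1 + c * u x : ℝ) : ℂ) * φ x := by rw [hx]; push_cast; ring
    rw [this, norm_mul, Complex.norm_real, Real.norm_eq_abs,
      mul_rpow (abs_nonneg _) (norm_nonneg _), mul_comm]
  have hN : (fun c : ℝ => PWnorm p fun z => φ z + c * g z) =
      fun c => ∫ x : ℝ, ‖φ x‖ ^ p * |1 + c * u x| ^ p :=
    funext fun c => integral_congr_ae (hnorm c)
  have hlocmin : IsLocalMin (fun c : ℝ => PWnorm p fun z => φ z + c * g z) 0 :=
    .of_forall fun c => by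
      simpa using hmin _ (hφPW.add_const_mul hp hg c) (by simp [hφ0, hg0])
  have hgp : Integrable fun x : ℝ => ‖φ x‖ ^ p * |u x| ^ p := by
    refine hg.2.2.congr ?_
    filter_upwards [hgu] with x hx
    rw [hx, norm_mul, Complex.norm_real, Real.norm_eq_abs,
      mul_rpow (abs_nonneg _) (norm_nonneg _), mul_comm]
  have hderiv := hasDerivAt_integral_mul_abs_one_add_mul_rpow hp hφPW.2.2 hu hφu hgp
  rw [← hN] at hderiv
  exact (mul_eq_zero.mp (hlocmin.hasDerivAt_eq_zero hderiv)).resolve_left hp.ne'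

lemma MemPW.integrable_norm_rpow_div_sub {p : ℝ} (hp : 0 < p) {f : ℂ → ℂ} (hf : MemPW p f)
    {t : ℝ} (ht : f t = 0) : Integrable fun x : ℝ => ‖f x‖ ^ p / (x - t) :=
  _root_.integrable_norm_rpow_div_sub hp (hf.1.continuous.comp Complex.continuous_ofReal)
    (hf.1 t).hasDerivAt.comp_ofReal.differentiableAt ht hf.2.2

lemma MemPW.integrable_norm_rpow_mul_div_sub {p : ℝ} (hp : 0 < p) {f : ℂ → ℂ} (hf : MemPW p f)
    {t : ℝ} (ht : f t = 0) : Integrable fun x : ℝ => ‖f x‖ ^ p * (x / (x - t)) := by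
  refine (hf.2.2.add ((hf.integrable_norm_rpow_div_sub hp ht).const_mul t)).congr ?_
  filter_upwards [volume.ae_ne t] with x hx
  have : x - t ≠ 0 := sub_ne_zero.mpr hx
  simp only [Pi.add_apply]
  field_simp
  ring

lemma MemPW.integrable_norm_rpow_mul_sq_div {p : ℝ} (hp : 0 < p) {f : ℂ → ℂ} (hf : MemPW p f)
    {t s : ℝ} (ht : f t = 0) (hs : f s = 0) (hts : t ≠ s) :
    Integrable fun x : ℝ => ‖f x‖ ^ p * (x ^ 2 / ((x - t) * (x - s))) := by
  refine ((hf.2.2.add ((hf.integrable_norm_rpow_div_sub hp ht).const_mul (t ^ 2 / (t - s)))).add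
    ((hf.integrable_norm_rpow_div_sub hp hs).const_mul (s ^ 2 / (s - t)))).congr ?_
  filter_upwards [volume.ae_ne t, volume.ae_ne s] with x hxt hxs
  have : x - t ≠ 0 := sub_ne_zero.mpr hxt
  have : x - s ≠ 0 := sub_ne_zero.mpr hxs
  have : t - s ≠ 0 := sub_ne_zero.mpr hts
  have : s - t ≠ 0 := sub_ne_zero.mpr hts.symm
  simp only [Pi.add_apply]
  field_simp
  ring

/-- Orthogonality relations associated with the zeros of an extremal function. -/
theorem extremal_orthogonality (p : ℝ) (hp : 0 < p) (φ : ℂ → ℂ)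
    (hφ : IsExtremal p φ) :
    (∀ t : ℝ, φ t = 0 →
      ∫ x : ℝ, ‖φ x‖ ^ p * (x / (x - t)) = 0) ∧
    (∀ t s : ℝ, φ t = 0 → φ s = 0 → t ≠ s →
      ∫ x : ℝ, ‖φ x‖ ^ p * (x ^ 2 / ((x - t) * (x - s))) = 0) := by
  have hφPW := hφ.1
  refine ⟨fun t ht => ?_, fun t s ht hs hts => ?_⟩
  · refine hφ.integral_mul_eq_zero hp (hφPW.mulDslope hp ht) (zero_mul _) (by fun_prop) ?_
      (hφPW.integrable_norm_rpow_mul_div_sub hp ht)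
    filter_upwards [volume.ae_ne t] with x hx
    rw [mulDslope_of_ne ht (by exact_mod_cast hx)]
    push_cast
    rfl
  · have hst : mulDslope φ t s = 0 := by
      rw [mulDslope_of_ne ht (by exact_mod_cast hts.symm), hs, mul_zero]
    refine hφ.integral_mul_eq_zero hp ((hφPW.mulDslope hp ht).mulDslope hp hst) (zero_mul _)
      (by fun_prop) ?_ (hφPW.integrable_norm_rpow_mul_sq_div hp ht hs hts)
    filter_upwards [volume.ae_ne t, volume.ae_ne s] with x hxt hxs
    rw [mulDslope_of_ne hst (by exact_mod_cast hxs), mulDslope_of_ne ht (by exact_mod_cast hxt)]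
    push_cast
    simp only [div_eq_mul_inv, mul_inv]
    ring
end
end
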